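/- arXiv:1002.0387 — 3 statements merged into one kernel-verified Lean document; each statement's English description precedes it below -/
import Mathlib

section
/- Let α be an m×m complex matrix with ‖α‖ < 1, let ρ = (I - α*α)^{1/2}, ρ̃ = (I - αα*)^{1/2}, a = I + α, b = I - α. Then a*ρ̃^{-2}a = aρ^{-2}a*, b*ρ̃^{-2}b = bρ^{-2}b*, and a*ρ̃^{-2}b + aρ^{-2}b* = b*ρ̃^{-2}a + bρ^{-2}a* = 2I. -/
open Matrix
open scoped Matrix.Norms.L2Operator ComplexOrder

/-!
Write `A = (1 - α*α)⁻¹` and `B = (1 - αα*)⁻¹`; both exist because `‖α*α‖ = ‖α‖² < 1`, and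
`ρ⁻² = A`, `ρ̃⁻² = B`. The push-through identities `αA = Bα`, `α*B = Aα*` together with
`αAα* = B - 1`, `α*Bα = A - 1` turn each claimed identity into a rearrangement of the same four
terms. These are identities in any ring, for `x, y` with `1 - yx` and `1 - xy` invertible, and
the `b`-identities are the `a`-identities for `-α`.
-/

namespace Matrix.PosSemidef

/-- The square root of a positive semidefinite matrix, as defined in the older Mathlib. -/
noncomputable def sqrt {n 𝕜 : Type*} [Fintype n] [RCLike 𝕜] [DecidableEq n]
    {A : Matrix n n 𝕜} (hA : PosSemidef A) : Matrix n n 𝕜 :=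
  hA.1.eigenvectorUnitary.1 * diagonal ((↑) ∘ (√·) ∘ hA.1.eigenvalues) *
    (star hA.1.eigenvectorUnitary.1)

variable {n 𝕜 : Type*} [Fintype n] [RCLike 𝕜] [DecidableEq n] {A : Matrix n n 𝕜}

theorem sqrt_mul_self (hA : PosSemidef A) : hA.sqrt * hA.sqrt = A := by
  set U := hA.1.eigenvectorUnitary.1
  set D := diagonal (((↑) : ℝ → 𝕜) ∘ (√·) ∘ hA.1.eigenvalues)
  have hD : D * D = diagonal (RCLike.ofReal ∘ hA.1.eigenvalues) := by
    rw [diagonal_mul_diagonal]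
    congr 1
    funext i
    simp only [Function.comp_apply]
    rw [← RCLike.ofReal_mul, Real.mul_self_sqrt (hA.eigenvalues_nonneg i)]
  calc hA.sqrt * hA.sqrt = U * D * (star U * U) * D * star U := by
        simp only [sqrt, U, D, mul_assoc]
    _ = A := by
        rw [Unitary.coe_star_mul_self, mul_one, mul_assoc U D D, hD]
        exact hA.1.spectral_theorem.symm

theorem sqrt_inv_mul_sqrt_inv (hA : PosSemidef A) : hA.sqrt⁻¹ * hA.sqrt⁻¹ = Ring.inverse A := by
  rw [← mul_inv_rev, sqrt_mul_self, nonsing_inv_eq_ringInverse]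

end Matrix.PosSemidef

namespace Ring

open scoped Ring

variable {R : Type*} [Ring R] {x y : R}

theorem mul_inverse_one_sub_mul (hyx : IsUnit (1 - y * x)) (hxy : IsUnit (1 - x * y)) :
    x * (1 - y * x)⁻¹ʳ = (1 - x * y)⁻¹ʳ * x :=
  calc x * (1 - y * x)⁻¹ʳ = (1 - x * y)⁻¹ʳ * ((1 - x * y) * x) * (1 - y * x)⁻¹ʳ := by
        rw [inverse_mul_cancel_left _ _ hxy]
    _ = (1 - x * y)⁻¹ʳ * x * ((1 - y * x) * (1 - y * x)⁻¹ʳ) := by noncomm_ring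
    _ = (1 - x * y)⁻¹ʳ * x := by rw [mul_inverse_cancel _ hyx, mul_one]

theorem mul_inverse_one_sub_mul_mul (hyx : IsUnit (1 - y * x)) (hxy : IsUnit (1 - x * y)) :
    x * (1 - y * x)⁻¹ʳ * y = (1 - x * y)⁻¹ʳ - 1 :=
  calc x * (1 - y * x)⁻¹ʳ * y = (1 - x * y)⁻¹ʳ * (1 - (1 - x * y)) := by
        rw [mul_inverse_one_sub_mul hyx hxy]; noncomm_ring
    _ = (1 - x * y)⁻¹ʳ - 1 := by rw [mul_sub, inverse_mul_cancel _ hxy, mul_one]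

theorem one_add_mul_inverse_mul_one_add_comm (hyx : IsUnit (1 - y * x))
    (hxy : IsUnit (1 - x * y)) :
    (1 + y) * (1 - x * y)⁻¹ʳ * (1 + x) = (1 + x) * (1 - y * x)⁻¹ʳ * (1 + y) := by
  linear_combination (norm := noncomm_ring)
    mul_inverse_one_sub_mul_mul hxy hyx - mul_inverse_one_sub_mul_mul hyx hxy +
      mul_inverse_one_sub_mul hxy hyx - mul_inverse_one_sub_mul hyx hxy

theorem one_add_mul_inverse_mul_one_sub_add (hyx : IsUnit (1 - y * x))
    (hxy : IsUnit (1 - x * y)) :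
    (1 + y) * (1 - x * y)⁻¹ʳ * (1 - x) + (1 + x) * (1 - y * x)⁻¹ʳ * (1 - y) = 2 := by
  linear_combination (norm := (noncomm_ring; norm_num))
    mul_inverse_one_sub_mul hyx hxy + mul_inverse_one_sub_mul hxy hyx -
      mul_inverse_one_sub_mul_mul hyx hxy - mul_inverse_one_sub_mul_mul hxy hyx

theorem one_sub_mul_inverse_mul_one_sub_comm (hyx : IsUnit (1 - y * x))
    (hxy : IsUnit (1 - x * y)) :
    (1 - y) * (1 - x * y)⁻¹ʳ * (1 - x) = (1 - x) * (1 - y * x)⁻¹ʳ * (1 - y) := by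
  rw [← neg_mul_neg] at hyx hxy
  simpa only [← sub_eq_add_neg, neg_mul_neg] using one_add_mul_inverse_mul_one_add_comm hyx hxy

theorem one_sub_mul_inverse_mul_one_add_add (hyx : IsUnit (1 - y * x))
    (hxy : IsUnit (1 - x * y)) :
    (1 - y) * (1 - x * y)⁻¹ʳ * (1 + x) + (1 - x) * (1 - y * x)⁻¹ʳ * (1 + y) = 2 := by
  rw [← neg_mul_neg] at hyx hxy
  simpa only [← sub_eq_add_neg, neg_mul_neg, sub_neg_eq_add] using
    one_add_mul_inverse_mul_one_sub_add hyx hxy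

end Ring

section CStarRing

variable {E : Type*} [NormedRing E] [StarRing E] [CStarRing E] [HasSummableGeomSeries E] {x : E}

theorem isUnit_one_sub_star_mul_self (hx : ‖x‖ < 1) : IsUnit (1 - star x * x) := by
  refine isUnit_one_sub_of_norm_lt_one ?_
  rw [CStarRing.norm_star_mul_self]
  nlinarith [norm_nonneg x]

theorem isUnit_one_sub_mul_star_self (hx : ‖x‖ < 1) : IsUnit (1 - x * star x) := by
  simpa only [star_star] using isUnit_one_sub_star_mul_self (x := star x) (by rwa [norm_star])

end CStarRing

/-- With `ρ = (I - α*α)^{1/2}`, `ρ̃ = (I - αα*)^{1/2}`, `a = I + α`, `b = I - α`,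
one has `a* ρ̃⁻² a = a ρ⁻² a*`, `b* ρ̃⁻² b = b ρ⁻² b*`, and
`a* ρ̃⁻² b + a ρ⁻² b* = b* ρ̃⁻² a + b ρ⁻² a* = 2 I`. -/
theorem stmt1 {m : ℕ} (α : Matrix (Fin m) (Fin m) ℂ) (hα : ‖α‖ < 1)
    (h1 : (1 - αᴴ * α).PosSemidef) (h2 : (1 - α * αᴴ).PosSemidef) :
    (1 + α)ᴴ * (h2.sqrt⁻¹ * h2.sqrt⁻¹) * (1 + α)
        = (1 + α) * (h1.sqrt⁻¹ * h1.sqrt⁻¹) * (1 + α)ᴴ ∧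
    (1 - α)ᴴ * (h2.sqrt⁻¹ * h2.sqrt⁻¹) * (1 - α)
        = (1 - α) * (h1.sqrt⁻¹ * h1.sqrt⁻¹) * (1 - α)ᴴ ∧
    (1 + α)ᴴ * (h2.sqrt⁻¹ * h2.sqrt⁻¹) * (1 - α)
        + (1 + α) * (h1.sqrt⁻¹ * h1.sqrt⁻¹) * (1 - α)ᴴ = 2 ∧
    (1 - α)ᴴ * (h2.sqrt⁻¹ * h2.sqrt⁻¹) * (1 + α)
        + (1 - α) * (h1.sqrt⁻¹ * h1.sqrt⁻¹) * (1 + α)ᴴ = 2 := by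
  have hu1 : IsUnit (1 - αᴴ * α) := isUnit_one_sub_star_mul_self hα
  have hu2 : IsUnit (1 - α * αᴴ) := isUnit_one_sub_mul_star_self hα
  rw [h1.sqrt_inv_mul_sqrt_inv, h2.sqrt_inv_mul_sqrt_inv, conjTranspose_add, conjTranspose_sub,
    conjTranspose_one]
  exact ⟨Ring.one_add_mul_inverse_mul_one_add_comm hu1 hu2,
    Ring.one_sub_mul_inverse_mul_one_sub_comm hu1 hu2,
    Ring.one_add_mul_inverse_mul_one_sub_add hu1 hu2,
    Ring.one_sub_mul_inverse_mul_one_add_add hu1 hu2⟩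
end

section
/- Let A, B, C, D be m×m complex matrices with A ≠ 0, B invertible, and (2√(‖A‖‖D‖) + ‖C‖)‖B^{-1}‖ < 1. Then the matrix Riccati equation XAX + BX + XC + D = 0 has a unique solution X with ‖X‖ < (1 - ‖C‖‖B^{-1}‖)/(2‖A‖‖B^{-1}‖). -/
/-!
Dividing by `B` turns the Riccati equation into the fixed-point equation
`X = -B⁻¹ (XAX + XC + D)`. On the ball `‖X‖ ≤ r` with `r = √(‖A‖‖D‖)/‖A‖` (so that
`‖A‖r² = ‖D‖`) this map is a self-map with Lipschitz constant `‖B⁻¹‖(2‖A‖r + ‖C‖) < 1`, so the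
Banach fixed-point theorem gives a solution. Any two solutions `X, Y` satisfy
`‖X - Y‖ ≤ ‖B⁻¹‖((‖X‖ + ‖Y‖)‖A‖ + ‖C‖)‖X - Y‖`, and the factor is `< 1` exactly when both lie in
the ball of radius `(1 - ‖C‖‖B⁻¹‖)/(2‖A‖‖B⁻¹‖)`.
-/

open Matrix Function Set
open scoped Matrix.Norms.L2Operator

section Riccati

variable {R : Type*}

def riccatiMap [Ring R] (a c d binv : R) (x : R) : R :=
  -(binv * (x * a * x + x * c + d))

theorem riccati_eq_zero_iff_isFixedPt [Ring R] {a b c d binv x : R} (hl : binv * b = 1)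
    (hr : b * binv = 1) :
    x * a * x + b * x + x * c + d = 0 ↔ IsFixedPt (riccatiMap a c d binv) x := by
  let u : Rˣ := ⟨b, binv, hr, hl⟩
  have hu : IsFixedPt (riccatiMap a c d binv) x ↔ -(x * a * x + x * c + d) = b * x := by
    rw [IsFixedPt, riccatiMap, ← mul_neg]
    exact u.inv_mul_eq_iff_eq_mul
  rw [hu, neg_eq_iff_add_eq_zero, add_comm]
  constructor <;> intro h <;> rw [← h] <;> abel

theorem riccatiMap_sub_riccatiMap [Ring R] (a c d binv x y : R) :
    riccatiMap a c d binv x - riccatiMap a c d binv y =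
      -(binv * (x * a * (x - y) + (x - y) * a * y + (x - y) * c)) := by
  simp only [riccatiMap]
  noncomm_ring

variable [NormedRing R] {a c d binv : R}

theorem norm_riccatiMap_le (x : R) :
    ‖riccatiMap a c d binv x‖ ≤ ‖binv‖ * (‖a‖ * ‖x‖ ^ 2 + ‖c‖ * ‖x‖ + ‖d‖) := by
  rw [riccatiMap, norm_neg]
  refine (norm_mul_le _ _).trans (mul_le_mul_of_nonneg_left ?_ (norm_nonneg _))
  calc ‖x * a * x + x * c + d‖ ≤ ‖x‖ * ‖a‖ * ‖x‖ + ‖x‖ * ‖c‖ + ‖d‖ := by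
        refine norm_add₃_le.trans ?_
        gcongr
        · exact norm_mul₃_le
        · exact norm_mul_le _ _
    _ = ‖a‖ * ‖x‖ ^ 2 + ‖c‖ * ‖x‖ + ‖d‖ := by ring

theorem norm_riccatiMap_sub_le (x y : R) :
    ‖riccatiMap a c d binv x - riccatiMap a c d binv y‖ ≤
      ‖binv‖ * ((‖x‖ + ‖y‖) * ‖a‖ + ‖c‖) * ‖x - y‖ := by
  rw [riccatiMap_sub_riccatiMap, norm_neg, mul_assoc ‖binv‖]
  refine (norm_mul_le _ _).trans (mul_le_mul_of_nonneg_left ?_ (norm_nonneg _))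
  calc ‖x * a * (x - y) + (x - y) * a * y + (x - y) * c‖
      ≤ ‖x‖ * ‖a‖ * ‖x - y‖ + ‖x - y‖ * ‖a‖ * ‖y‖ + ‖x - y‖ * ‖c‖ := by
        refine norm_add₃_le.trans ?_
        gcongr
        · exact norm_mul₃_le
        · exact norm_mul₃_le
        · exact norm_mul_le _ _
    _ = ((‖x‖ + ‖y‖) * ‖a‖ + ‖c‖) * ‖x - y‖ := by ring

theorem eq_of_isFixedPt_riccatiMap {x y : R} (hx : IsFixedPt (riccatiMap a c d binv) x)
    (hy : IsFixedPt (riccatiMap a c d binv) y) (hxK : ‖binv‖ * (2 * ‖a‖ * ‖x‖ + ‖c‖) < 1)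
    (hyK : ‖binv‖ * (2 * ‖a‖ * ‖y‖ + ‖c‖) < 1) : x = y := by
  have hle := norm_riccatiMap_sub_le (a := a) (c := c) (d := d) (binv := binv) x y
  rw [hx.eq, hy.eq] at hle
  have hK : ‖binv‖ * ((‖x‖ + ‖y‖) * ‖a‖ + ‖c‖) < 1 := by linarith
  have : ‖x - y‖ ≤ 0 := by nlinarith [norm_nonneg (x - y)]
  exact sub_eq_zero.mp (norm_le_zero_iff.mp this)

theorem exists_norm_le_isFixedPt_riccatiMap [CompleteSpace R] {r : ℝ} (hr : 0 ≤ r)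
    (hmaps : ‖binv‖ * (‖a‖ * r ^ 2 + ‖c‖ * r + ‖d‖) ≤ r)
    (hcontr : ‖binv‖ * (2 * ‖a‖ * r + ‖c‖) < 1) :
    ∃ x, ‖x‖ ≤ r ∧ IsFixedPt (riccatiMap a c d binv) x := by
  have hball : ∀ x : R, x ∈ Metric.closedBall 0 r ↔ ‖x‖ ≤ r := fun x => by simp
  have hsf : MapsTo (riccatiMap a c d binv) (Metric.closedBall 0 r) (Metric.closedBall 0 r) := by
    intro x hx
    rw [hball] at hx ⊢
    refine (norm_riccatiMap_le x).trans (le_trans ?_ hmaps)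
    gcongr
  have hlip : LipschitzOnWith (‖binv‖ * (2 * ‖a‖ * r + ‖c‖)).toNNReal (riccatiMap a c d binv)
      (Metric.closedBall 0 r) := by
    refine LipschitzOnWith.of_dist_le' fun x hx y hy => ?_
    rw [hball] at hx hy
    simp only [dist_eq_norm]
    refine (norm_riccatiMap_sub_le x y).trans ?_
    have : (‖x‖ + ‖y‖) * ‖a‖ ≤ 2 * ‖a‖ * r := by nlinarith [norm_nonneg a]
    gcongr
  obtain ⟨x, hx, hfix, -⟩ := ContractingWith.exists_fixedPoint' Metric.isClosed_closedBall.isComplete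
    hsf ⟨Real.toNNReal_lt_one.mpr hcontr, hlip.mapsToRestrict hsf⟩ (Metric.mem_closedBall_self hr)
    (edist_ne_top _ _)
  exact ⟨x, (hball x).mp hx, hfix⟩

theorem exists_isFixedPt_riccatiMap [CompleteSpace R] (ha : 0 < ‖a‖)
    (h : (2 * Real.sqrt (‖a‖ * ‖d‖) + ‖c‖) * ‖binv‖ < 1) :
    ∃ x, IsFixedPt (riccatiMap a c d binv) x ∧ ‖binv‖ * (2 * ‖a‖ * ‖x‖ + ‖c‖) < 1 := by
  set s := Real.sqrt (‖a‖ * ‖d‖)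
  have hs : s ^ 2 = ‖a‖ * ‖d‖ := Real.sq_sqrt (by positivity)
  set r := s / ‖a‖
  have hr : 0 ≤ r := by positivity
  have har : ‖a‖ * r = s := mul_div_cancel₀ s ha.ne'
  have hcontr : ‖binv‖ * (2 * ‖a‖ * r + ‖c‖) < 1 := by rw [mul_assoc 2, har]; linarith
  -- `‖a‖ r² = ‖d‖`, so the self-map condition reads `(2s + ‖c‖)‖binv‖ r ≤ r`
  have hmaps : ‖binv‖ * (‖a‖ * r ^ 2 + ‖c‖ * r + ‖d‖) ≤ r := by
    have hd : ‖d‖ = s * r := by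
      rw [mul_div_assoc', ← sq, hs, mul_div_cancel_left₀ _ ha.ne']
    have : ‖a‖ * r ^ 2 = s * r := by rw [sq, ← mul_assoc, har]
    rw [this, hd]
    nlinarith
  obtain ⟨x, hxr, hx⟩ := exists_norm_le_isFixedPt_riccatiMap hr hmaps hcontr
  refine ⟨x, hx, lt_of_le_of_lt ?_ hcontr⟩
  gcongr

end Riccati

/-- If `A ≠ 0`, `B` is invertible and `(2√(‖A‖‖D‖)+‖C‖)‖B⁻¹‖ < 1`, then the
Riccati equation `XAX + BX + XC + D = 0` has a unique solution with
`‖X‖ < (1-‖C‖‖B⁻¹‖)/(2‖A‖‖B⁻¹‖)`. -/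
theorem stmt6 {m : ℕ} (A B C D : Matrix (Fin m) (Fin m) ℂ) (hA : A ≠ 0) (hB : IsUnit B)
    (h : (2 * Real.sqrt (‖A‖ * ‖D‖) + ‖C‖) * ‖B⁻¹‖ < 1) :
    ∃! X : Matrix (Fin m) (Fin m) ℂ,
      X * A * X + B * X + X * C + D = 0 ∧
        ‖X‖ < (1 - ‖C‖ * ‖B⁻¹‖) / (2 * ‖A‖ * ‖B⁻¹‖) := by
  have hdet := (isUnit_iff_isUnit_det B).mp hB
  have hl : B⁻¹ * B = 1 := nonsing_inv_mul B hdet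
  have hr : B * B⁻¹ = 1 := mul_nonsing_inv B hdet
  have : Nontrivial (Matrix (Fin m) (Fin m) ℂ) := nontrivial_of_ne A 0 hA
  have hα : 0 < ‖A‖ := norm_pos_iff.mpr hA
  have hβ : 0 < ‖B⁻¹‖ := norm_pos_iff.mpr (left_ne_zero_of_mul_eq_one hl)
  have hball : ∀ X : Matrix (Fin m) (Fin m) ℂ,
      ‖X‖ < (1 - ‖C‖ * ‖B⁻¹‖) / (2 * ‖A‖ * ‖B⁻¹‖) ↔ ‖B⁻¹‖ * (2 * ‖A‖ * ‖X‖ + ‖C‖) < 1 := by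
    intro X
    rw [lt_div_iff₀ (by positivity)]
    constructor <;> intro _ <;> linarith
  obtain ⟨X, hX, hXK⟩ := exists_isFixedPt_riccatiMap hα h
  refine ⟨X, ⟨(riccati_eq_zero_iff_isFixedPt hl hr).mpr hX, (hball X).mpr hXK⟩, ?_⟩
  rintro Y ⟨hY, hYR⟩
  exact eq_of_isFixedPt_riccatiMap ((riccati_eq_zero_iff_isFixedPt hl hr).mp hY) hX
    ((hball Y).mp hYR) hXK
end

section
/- Let A, B, C, D be m×m complex matrices with A ≠ 0, B invertible, and (2√(‖A‖‖D‖) + ‖C‖)‖B^{-1}‖ < 1. Then the unique solution X of XAX + BX + XC + D = 0 with ‖X‖ < (1-‖C‖‖B^{-1}‖)/(2‖A‖‖B^{-1}‖) satisfies the bound ‖X‖ ≤ r₋, where r₋ = (1-‖C‖‖B^{-1}‖)/(2‖A‖‖B^{-1}‖) - sqrt( ((1-‖C‖‖B^{-1}‖)/(2‖A‖‖B^{-1}‖))² - ‖D‖/‖A‖ ). -/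
open Matrix
open scoped Matrix.Norms.L2Operator

/-!
Rewriting the Riccati equation as `X = -B⁻¹ (XAX + XC + D)` and taking norms gives the scalar
quadratic inequality `x ≤ ‖B⁻¹‖ (‖A‖ x² + ‖C‖ x + ‖D‖)` for `x = ‖X‖`, i.e. `x` lies outside the
open interval between the two roots `r₀ ∓ √(r₀² - ‖D‖/‖A‖)` of the associated quadratic, where
`r₀ = (1 - ‖C‖‖B⁻¹‖) / (2‖A‖‖B⁻¹‖)`. The
hypothesis `x < r₀` excludes the part beyond the larger root, so `x` is at most the smaller one.
-/

theorem norm_le_of_mul_eq_one_of_riccati {R : Type*} [NormedRing R] {A B B' C D X : R}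
    (hB : B' * B = 1) (heq : X * A * X + B * X + X * C + D = 0) :
    ‖X‖ ≤ ‖B'‖ * (‖A‖ * ‖X‖ ^ 2 + ‖C‖ * ‖X‖ + ‖D‖) := by
  have hBX : B * X = -(X * A * X + X * C + D) :=
    eq_neg_of_add_eq_zero_left (by rw [← heq]; noncomm_ring)
  have hX : X = -(B' * (X * A * X + X * C + D)) := by
    rw [← mul_neg, ← hBX, ← mul_assoc, hB, one_mul]
  have hXAX : ‖X * A * X‖ ≤ ‖A‖ * ‖X‖ ^ 2 := by
    calc ‖X * A * X‖ ≤ ‖X‖ * ‖A‖ * ‖X‖ := norm_mul₃_le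
      _ = ‖A‖ * ‖X‖ ^ 2 := by ring
  calc ‖X‖ = ‖-(B' * (X * A * X + X * C + D))‖ := congrArg norm hX
    _ = ‖B' * (X * A * X + X * C + D)‖ := norm_neg _
    _ ≤ ‖B'‖ * (‖X * A * X‖ + ‖X * C‖ + ‖D‖) :=
        (norm_mul_le _ _).trans (by gcongr; exact norm_add₃_le)
    _ ≤ ‖B'‖ * (‖A‖ * ‖X‖ ^ 2 + ‖C‖ * ‖X‖ + ‖D‖) := by
        gcongr
        exact (norm_mul_le _ _).trans_eq (mul_comm _ _)

theorem le_sub_sqrt_of_two_mul_le_sq_add {r x e : ℝ} (hx : x < r) (h : 2 * r * x ≤ x ^ 2 + e) :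
    x ≤ r - Real.sqrt (r ^ 2 - e) := by
  have : Real.sqrt (r ^ 2 - e) ≤ r - x :=
    Real.sqrt_le_iff.mpr ⟨by linarith, by nlinarith⟩
  linarith

theorem two_mul_le_sq_add_of_le_quadratic {a b c d x : ℝ} (ha : 0 < a) (hb : 0 < b)
    (h : x ≤ b * (a * x ^ 2 + c * x + d)) :
    2 * ((1 - c * b) / (2 * a * b)) * x ≤ x ^ 2 + d / a := by
  have hlhs : 2 * ((1 - c * b) / (2 * a * b)) * x = (1 - c * b) * x / (a * b) := by
    field_simp
  have hrhs : x ^ 2 + d / a = (a * b * x ^ 2 + d * b) / (a * b) := by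
    field_simp
  rw [hlhs, hrhs]
  gcongr
  linarith

theorem stmt7_general {m : ℕ} (A B C D : Matrix (Fin m) (Fin m) ℂ) (hB : IsUnit B) :
    ∀ X : Matrix (Fin m) (Fin m) ℂ,
      X * A * X + B * X + X * C + D = 0 →
      ‖X‖ < (1 - ‖C‖ * ‖B⁻¹‖) / (2 * ‖A‖ * ‖B⁻¹‖) →
      ‖X‖ ≤ (1 - ‖C‖ * ‖B⁻¹‖) / (2 * ‖A‖ * ‖B⁻¹‖)
        - Real.sqrt (((1 - ‖C‖ * ‖B⁻¹‖) / (2 * ‖A‖ * ‖B⁻¹‖)) ^ 2 - ‖D‖ / ‖A‖) := by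
  intro X heq hx
  -- `‖X‖ < r₀` forces `r₀ > 0`, so its denominator cannot be the junk value `0`.
  have hden : 2 * ‖A‖ * ‖B⁻¹‖ ≠ 0 := by
    rintro h0
    rw [h0, div_zero] at hx
    exact (norm_nonneg X).not_gt hx
  have ha : 0 < ‖A‖ := (norm_nonneg A).lt_of_ne' (right_ne_zero_of_mul (left_ne_zero_of_mul hden))
  have hb : 0 < ‖B⁻¹‖ := (norm_nonneg _).lt_of_ne' (right_ne_zero_of_mul hden)
  have hinv : B⁻¹ * B = 1 := nonsing_inv_mul B ((isUnit_iff_isUnit_det B).mp hB)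
  exact le_sub_sqrt_of_two_mul_le_sq_add hx <| two_mul_le_sq_add_of_le_quadratic ha hb <|
    norm_le_of_mul_eq_one_of_riccati hinv heq

/-- Under the Riccati lemma hypotheses, any solution `X` of
`XAX + BX + XC + D = 0` with `‖X‖ < (1-‖C‖‖B⁻¹‖)/(2‖A‖‖B⁻¹‖)` satisfies `‖X‖ ≤ r₋`, where
`r₋` is the smaller root of the associated scalar quadratic. -/
theorem stmt7 {m : ℕ} (A B C D : Matrix (Fin m) (Fin m) ℂ) (hA : A ≠ 0) (hB : IsUnit B)
    (h : (2 * Real.sqrt (‖A‖ * ‖D‖) + ‖C‖) * ‖B⁻¹‖ < 1) :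
    ∀ X : Matrix (Fin m) (Fin m) ℂ,
      X * A * X + B * X + X * C + D = 0 →
      ‖X‖ < (1 - ‖C‖ * ‖B⁻¹‖) / (2 * ‖A‖ * ‖B⁻¹‖) →
      ‖X‖ ≤ (1 - ‖C‖ * ‖B⁻¹‖) / (2 * ‖A‖ * ‖B⁻¹‖)
        - Real.sqrt (((1 - ‖C‖ * ‖B⁻¹‖) / (2 * ‖A‖ * ‖B⁻¹‖)) ^ 2 - ‖D‖ / ‖A‖) :=
  stmt7_general A B C D hB
end
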